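/- If K ⊂ ℝⁿ is a symmetric convex body with γ_n(K) ≥ δ, and c > 0 is chosen so that (1/√(2π)) ∫_{−c}^{c} e^{−x²/2} dx = δ, then the centered Euclidean ball of radius c is contained in K. -/

import Mathlib

/-!
If a point `p` with `‖p‖ ≤ c` were missing from `K`, separating it from `K` by a hyperplane and
using the symmetry of `K` would put `K` inside a slab `{x | |⟪θ, x⟫| ≤ t}` with `‖θ‖ = 1` and
`t < ‖p‖ ≤ c`. The measure `gauss n` is Mathlib's `stdGaussian` (their characteristic functions
agree), whose image under `⟪θ, ·⟫` is `N(0, 1)`; so the slab, and hence `K`, has mass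
`γ₁[-t, t] < γ₁[-c, c] = δ`.
-/

open MeasureTheory Real
open scoped RealInnerProductSpace Pointwise

/-- The standard Gaussian measure on `ℝⁿ`. -/
noncomputable def gauss (n : ℕ) : Measure (EuclideanSpace ℝ (Fin n)) :=
  volume.withDensity (fun x => ENNReal.ofReal ((2 * π) ^ (-(n : ℝ) / 2) * Real.exp (-‖x‖ ^ 2 / 2)))

/-- The Gaussian mean-width `w(K) = E[sup_{x ∈ K} ⟨Γ, x⟩]` of a set `K ⊆ ℝⁿ`. -/
noncomputable def meanWidth (n : ℕ) (K : Set (EuclideanSpace ℝ (Fin n))) : ℝ :=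
  ∫ g, sSup ((fun x => ⟪g, x⟫) '' K) ∂(gauss n)

open ProbabilityTheory

lemma Convex.zero_mem_of_neg_mem {E : Type*} [AddCommGroup E] [Module ℝ E] {K : Set E}
    (hK : Convex ℝ K) (hneg : ∀ x ∈ K, -x ∈ K) (hne : K.Nonempty) : (0 : E) ∈ K := by
  obtain ⟨x, hx⟩ := hne
  simpa using hK hx (hneg x hx) (by norm_num : (0 : ℝ) ≤ 1 / 2) (by norm_num : (0 : ℝ) ≤ 1 / 2)
    (by norm_num)

lemma exists_subset_abs_inner_le_of_notMem {E : Type*} [NormedAddCommGroup E]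
    [InnerProductSpace ℝ E] [CompleteSpace E] {K : Set E} (hK : Convex ℝ K) (hKcl : IsClosed K)
    (hneg : ∀ x ∈ K, -x ∈ K) (hne : K.Nonempty) {p : E} (hp : p ∉ K) :
    ∃ θ : E, ‖θ‖ = 1 ∧ ∃ t, 0 ≤ t ∧ t < ‖p‖ ∧ K ⊆ {x | |⟪θ, x⟫| ≤ t} := by
  obtain ⟨f, u, hfK, hfp⟩ := geometric_hahn_banach_closed_point hK hKcl hp
  have hu : 0 < u := by simpa using hfK 0 (hK.zero_mem_of_neg_mem hneg hne)
  set v := (InnerProductSpace.toDual ℝ E).symm f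
  have hv : ∀ x, ⟪v, x⟫ = f x := fun x => InnerProductSpace.toDual_symm_apply
  have hv0 : 0 < ‖v‖ := norm_pos_iff.2 fun h => by
    have := hv p
    rw [h, inner_zero_left] at this
    linarith
  set θ := ‖v‖⁻¹ • v
  have hθ1 : ‖θ‖ = 1 := by rw [norm_smul, norm_inv, norm_norm, inv_mul_cancel₀ hv0.ne']
  have hθ : ∀ x, ⟪θ, x⟫ = ‖v‖⁻¹ * f x := fun x => by rw [real_inner_smul_left, hv]
  refine ⟨θ, hθ1, ‖v‖⁻¹ * u, by positivity, ?_, fun x hx => ?_⟩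
  · calc ‖v‖⁻¹ * u < ⟪θ, p⟫ := by rw [hθ]; gcongr
      _ ≤ ‖θ‖ * ‖p‖ := real_inner_le_norm _ _
      _ = ‖p‖ := by rw [hθ1, one_mul]
  · have hfneg := hfK _ (hneg x hx)
    rw [map_neg] at hfneg
    rw [Set.mem_ofPred_eq, hθ, abs_mul, abs_inv, abs_norm]
    gcongr
    exact abs_le.2 ⟨by linarith, (hfK x hx).le⟩

lemma gaussianReal_Icc_neg_lt_Icc_neg (μ : ℝ) {v : NNReal} (hv : v ≠ 0) {s t : ℝ} (hs : 0 ≤ s)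
    (hst : s < t) : gaussianReal μ v (Set.Icc (-s) s) < gaussianReal μ v (Set.Icc (-t) t) := by
  have hpos : 0 < gaussianReal μ v (Set.Ioc s t) := pos_iff_ne_zero.2 fun h =>
    hst.not_ge (by simpa using gaussianReal_absolutelyContinuous' μ hv h)
  calc gaussianReal μ v (Set.Icc (-s) s)
      < gaussianReal μ v (Set.Icc (-s) s) + gaussianReal μ v (Set.Ioc s t) :=
        ENNReal.lt_add_right (measure_ne_top _ _) hpos.ne'
    _ = gaussianReal μ v (Set.Icc (-s) s ∪ Set.Ioc s t) :=
        (measure_union (Set.disjoint_left.2 fun x hx hx' => hx'.1.not_ge hx.2)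
          measurableSet_Ioc).symm
    _ ≤ gaussianReal μ v (Set.Icc (-t) t) := measure_mono <| Set.union_subset
        (Set.Icc_subset_Icc (by linarith) hst.le) fun x hx => ⟨by linarith [hx.1], hx.2⟩

lemma gaussianReal_Icc_neg (t : ℝ) :
    gaussianReal 0 1 (Set.Icc (-t) t) =
      ENNReal.ofReal (1 / √(2 * π) * ∫ x in Set.Icc (-t) t, rexp (-x ^ 2 / 2)) := by
  rw [gaussianReal_apply_eq_integral 0 one_ne_zero, gaussianPDFReal_def, integral_const_mul]
  simp

section StdGaussian

variable {V : Type*} [NormedAddCommGroup V] [InnerProductSpace ℝ V] [FiniteDimensional ℝ V]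
  [MeasurableSpace V] [BorelSpace V]

lemma integral_exp_neg_sq_norm_div_two :
    ∫ x : V, rexp (-‖x‖ ^ 2 / 2) = (2 * π) ^ (Module.finrank ℝ V / 2 : ℝ) := by
  have h := GaussianFourier.integral_rexp_neg_mul_sq_norm (V := V) (b := 1 / 2) (by norm_num)
  rw [div_div_eq_mul_div, div_one, mul_comm π] at h
  simpa [neg_div, div_eq_inv_mul] using h

lemma integrable_exp_neg_sq_norm_div_two : Integrable fun x : V => rexp (-‖x‖ ^ 2 / 2) :=
  Integrable.of_integral_ne_zero <| by rw [integral_exp_neg_sq_norm_div_two]; positivity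

lemma integral_cexp_neg_sq_norm_div_two_add_inner_mul_I (t : V) :
    ∫ x : V, Complex.exp (-‖x‖ ^ 2 / 2 + ⟪x, t⟫ * Complex.I) =
      ((2 * π) ^ (Module.finrank ℝ V / 2 : ℝ) : ℝ) * Complex.exp (-‖t‖ ^ 2 / 2) := by
  have h := GaussianFourier.integral_cexp_neg_mul_sq_norm_add (V := V) (b := 1 / 2) (by norm_num)
    Complex.I t
  rw [Complex.ofReal_cpow (by positivity)]
  convert h using 3 with x
  · rw [real_inner_comm]; ring_nf
  · push_cast; ring
  · push_cast; ring
  · rw [Complex.I_sq]; ring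

lemma stdGaussian_map_inner (θ : V) :
    (stdGaussian V).map (fun x => ⟪θ, x⟫) = gaussianReal 0 (‖θ‖₊ ^ 2) := by
  have h := IsGaussian.map_eq_gaussianReal (μ := stdGaussian V) (innerSL ℝ θ)
  rw [integral_strongDual_stdGaussian, variance_dual_stdGaussian, innerSL_apply_norm] at h
  simpa [Real.toNNReal_pow] using h

lemma stdGaussian_abs_inner_le {θ : V} (hθ : ‖θ‖ = 1) (t : ℝ) :
    stdGaussian V {x | |⟪θ, x⟫| ≤ t} = gaussianReal 0 1 (Set.Icc (-t) t) := by
  have hθ' : ‖θ‖₊ = 1 := by ext; simpa using hθ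
  rw [← one_pow 2, ← hθ', ← stdGaussian_map_inner,
    Measure.map_apply (by fun_prop) measurableSet_Icc]
  simp only [Set.preimage, Set.mem_Icc, abs_le]

theorem closedBall_subset_of_gaussianReal_Icc_le_stdGaussian {K : Set V} (hK : Convex ℝ K)
    (hKcl : IsClosed K) (hneg : ∀ x ∈ K, -x ∈ K) {c : ℝ} (hc : 0 < c)
    (hKc : gaussianReal 0 1 (Set.Icc (-c) c) ≤ stdGaussian V K) :
    Metric.closedBall 0 c ⊆ K := by
  have hKpos : 0 < stdGaussian V K :=
    pos_of_gt ((gaussianReal_Icc_neg_lt_Icc_neg 0 one_ne_zero le_rfl hc).trans_le hKc)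
  have hne : K.Nonempty := nonempty_of_measure_ne_zero hKpos.ne'
  intro p hp
  by_contra hpK
  obtain ⟨θ, hθ, t, ht0, htp, hKθ⟩ := exists_subset_abs_inner_le_of_notMem hK hKcl hneg hne hpK
  have htc : t < c := htp.trans_le (mem_closedBall_zero_iff.1 hp)
  refine (gaussianReal_Icc_neg_lt_Icc_neg 0 one_ne_zero ht0 htc).not_ge ?_
  calc gaussianReal 0 1 (Set.Icc (-c) c) ≤ stdGaussian V K := hKc
    _ ≤ stdGaussian V {x | |⟪θ, x⟫| ≤ t} := measure_mono hKθ
    _ = gaussianReal 0 1 (Set.Icc (-t) t) := stdGaussian_abs_inner_le hθ t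

end StdGaussian

instance isProbabilityMeasure_gauss (n : ℕ) : IsProbabilityMeasure (gauss n) := by
  constructor
  rw [gauss, withDensity_apply _ MeasurableSet.univ, Measure.restrict_univ,
    ← ofReal_integral_eq_lintegral_ofReal (integrable_exp_neg_sq_norm_div_two.const_mul _)
      (Filter.Eventually.of_forall fun x => by positivity),
    integral_const_mul, integral_exp_neg_sq_norm_div_two, finrank_euclideanSpace_fin,
    ← Real.rpow_add (by positivity), neg_div, neg_add_cancel, Real.rpow_zero, ENNReal.ofReal_one]

lemma charFun_gauss (n : ℕ) (t : EuclideanSpace ℝ (Fin n)) :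
    charFun (gauss n) t = Complex.exp (-‖t‖ ^ 2 / 2) := by
  rw [charFun_apply, gauss, integral_withDensity_eq_integral_toReal_smul (by fun_prop)
    (Filter.Eventually.of_forall fun x => ENNReal.ofReal_lt_top)]
  have h := integral_cexp_neg_sq_norm_div_two_add_inner_mul_I t
  rw [finrank_euclideanSpace_fin] at h
  calc _ = ∫ x : EuclideanSpace ℝ (Fin n), (((2 * π) ^ (-(n : ℝ) / 2) : ℝ) : ℂ) *
        Complex.exp (-‖x‖ ^ 2 / 2 + ⟪x, t⟫ * Complex.I) := by
        refine integral_congr_ae (Filter.Eventually.of_forall fun x => ?_)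
        simp only
        rw [ENNReal.toReal_ofReal (by positivity), Complex.exp_add, Complex.real_smul]
        push_cast; ring
    _ = _ := by
      rw [integral_const_mul, h, ← mul_assoc, ← Complex.ofReal_mul, ← Real.rpow_add (by positivity),
        neg_div, neg_add_cancel, Real.rpow_zero, Complex.ofReal_one, one_mul]

lemma gauss_eq_stdGaussian (n : ℕ) : gauss n = stdGaussian (EuclideanSpace ℝ (Fin n)) :=
  Measure.ext_of_charFun <| funext fun t => by rw [charFun_gauss, charFun_stdGaussian]

theorem stmt18 (n : ℕ) (δ c : ℝ) (hc : 0 < c)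
    (K : Set (EuclideanSpace ℝ (Fin n)))
    (hK : Convex ℝ K) (hsym : K = -K) (hKcl : IsClosed K)
    (hγ : ENNReal.ofReal δ ≤ gauss n K)
    (hcδ : (1 / Real.sqrt (2 * π)) * ∫ x in Set.Icc (-c) c, Real.exp (-x ^ 2 / 2) = δ) :
    Metric.closedBall 0 c ⊆ K := by
  refine closedBall_subset_of_gaussianReal_Icc_le_stdGaussian hK hKcl
    (fun x hx => by rwa [hsym, Set.mem_neg, neg_neg]) hc ?_
  rwa [gaussianReal_Icc_neg, hcδ, ← gauss_eq_stdGaussian]
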